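/- For all integers q ≥ 2 and n ≥ 1, the family 𝓔_q is n-cell implementable under scenario (••) if and only if q ≤ C(2n, n). -/

import Mathlib

/-- The alphabet 𝔹• = {0, 1, ∗, •}. -/
inductive BB : Type
  | zero
  | one
  | star
  | reject
deriving DecidableEq

instance : Fintype BB where
  elems := {BB.zero, BB.one, BB.star, BB.reject}
  complete := by intro x; cases x <;> simp

/-- The cell function T : 𝔹• × 𝔹• → 𝔹: T(u,ϑ) = 1 iff u = ∗, or ϑ = ∗,
or u,ϑ ∈ 𝔹 with u = ϑ. -/
def Tcell : BB → BB → Bool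
  | BB.star, _ => true
  | _, BB.star => true
  | BB.zero, BB.zero => true
  | BB.one, BB.one => true
  | _, _ => false

/-- The word-level function T(u,ϑ) = ⋀_{j<n} T(u_j, ϑ_j). -/
def Tword {n : ℕ} (u θ : Fin n → BB) : Bool :=
  decide (∀ j, Tcell (u j) (θ j) = true)

/-- The alphabet 𝔹 = {0,1} ⊆ 𝔹•. -/
def Bcirc : Set BB := {BB.zero, BB.one}

/-- The alphabet 𝔹∗ = {0,1,∗} ⊆ 𝔹•. -/
def Bstar : Set BB := {BB.zero, BB.one, BB.star}

/-- The full alphabet 𝔹•. -/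
def Bdot : Set BB := Set.univ

/-- A family Φ of functions {0,…,q−1} → 𝔹 is n-cell implementable under
scenario (A,B) if there are mappings u : {0,…,q−1} → A^n and ϑ : Φ → B^n
with f(x) = T(u(x), ϑ(f)) for all f ∈ Φ and x. -/
def Implementable (A B : Set BB) (n q : ℕ) (Φ : Set (Fin q → Bool)) : Prop :=
  ∃ u : Fin q → Fin n → BB, ∃ θ : (Fin q → Bool) → Fin n → BB,
    (∀ x j, u x j ∈ A) ∧ (∀ f ∈ Φ, ∀ j, θ f j ∈ B) ∧
    (∀ f ∈ Φ, ∀ x, f x = Tword (u x) (θ f))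

/-- The family 𝓔_q = { x ↦ [x = t] : t ∈ [q⟩ }. -/
def Eset (q : ℕ) : Set (Fin q → Bool) :=
  { f | ∃ t : Fin q, f = fun x => decide (x = t) }

/-- The family 𝓝_q = { x ↦ [x ≠ t] : t ∈ [q⟩ }. -/
def Nset (q : ℕ) : Set (Fin q → Bool) :=
  { f | ∃ t : Fin q, f = fun x => decide (x ≠ t) }

/-- The family 𝓖_q = { x ↦ [x ≥ t] : t ∈ [q⟩ }. -/
def Gset (q : ℕ) : Set (Fin q → Bool) :=
  { f | ∃ t : Fin q, f = fun x => decide (t ≤ x) }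

/-- The family 𝓛_q = { x ↦ [x ≤ t] : t ∈ [q⟩ }. -/
def Lset (q : ℕ) : Set (Fin q → Bool) :=
  { f | ∃ t : Fin q, f = fun x => decide (x ≤ t) }

/-! Each letter is recorded by the set of bits it conflicts with, so that a cell accepts exactly
when the conflict sets of its two letters are disjoint. A word of length `n` then becomes a subset
of the `2n`-element set `Fin n × Bool`, and every subset arises, on either side. Implementing `𝓔_q`
amounts to sets `D t`, `B t` with `D s ∩ B t = ∅ ↔ s = t`; then `D s ⊆ D t` forces `s = t`, so the
`D t` form an antichain of `q` sets and Sperner's theorem gives `q ≤ C(2n, n)`. Conversely, `q`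
distinct `n`-subsets `D t` together with `B t = (D t)ᶜ` do the job. -/

open Finset

def rowConflict : BB → Finset Bool
  | BB.zero => {false}
  | BB.one => {true}
  | BB.star => ∅
  | BB.reject => univ

def colConflict : BB → Finset Bool
  | BB.zero => {true}
  | BB.one => {false}
  | BB.star => ∅
  | BB.reject => univ

lemma Tcell_eq_true_iff (x y : BB) :
    Tcell x y = true ↔ Disjoint (rowConflict x) (colConflict y) := by
  revert x y; decide

lemma rowConflict_surjective : Function.Surjective rowConflict := by
  unfold Function.Surjective; decide

lemma colConflict_surjective : Function.Surjective colConflict := by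
  unfold Function.Surjective; decide

section Words

variable {ι : Type*} [Fintype ι]

def wordConflict (c : BB → Finset Bool) (u : ι → BB) : Finset (ι × Bool) :=
  univ.filter fun p => p.2 ∈ c (u p.1)

lemma mem_wordConflict {c : BB → Finset Bool} {u : ι → BB} {p : ι × Bool} :
    p ∈ wordConflict c u ↔ p.2 ∈ c (u p.1) := by
  simp [wordConflict]

lemma wordConflict_surjective {c : BB → Finset Bool} (hc : Function.Surjective c) :
    Function.Surjective (wordConflict (ι := ι) c) := by
  classical
  intro S
  refine ⟨fun j => (hc (univ.filter fun b => (j, b) ∈ S)).choose, ?_⟩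
  ext p
  rw [mem_wordConflict, (hc _).choose_spec, mem_filter]
  simp

end Words

lemma Tword_eq_true_iff {n : ℕ} (u θ : Fin n → BB) :
    Tword u θ = true ↔ Disjoint (wordConflict rowConflict u) (wordConflict colConflict θ) := by
  simp only [Tword, decide_eq_true_iff, Tcell_eq_true_iff, Finset.disjoint_left,
    mem_wordConflict, Prod.forall]

lemma implementable_Eset_iff (n q : ℕ) :
    Implementable Bdot Bdot n q (Eset q) ↔
      ∃ D B : Fin q → Finset (Fin n × Bool), ∀ s t, Disjoint (D s) (B t) ↔ s = t := by
  constructor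
  · rintro ⟨u, θ, -, -, hT⟩
    refine ⟨fun s => wordConflict rowConflict (u s),
      fun t => wordConflict colConflict (θ fun x => decide (x = t)), fun s t => ?_⟩
    rw [← Tword_eq_true_iff, ← hT _ ⟨t, rfl⟩ s, decide_eq_true_iff]
  · rintro ⟨D, B, hDB⟩
    choose u hu using wordConflict_surjective rowConflict_surjective (ι := Fin n)
    choose θ hθ using wordConflict_surjective colConflict_surjective (ι := Fin n)
    set e : Fin q → Fin q → Bool := fun t x => decide (x = t)
    have he : Function.Injective e := fun s t h => by simpa [e] using congrFun h s
    refine ⟨fun s => u (D s), Function.extend e (fun t => θ (B t)) fun _ _ => BB.star,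
      fun _ _ => trivial, fun _ _ _ => trivial, ?_⟩
    rintro _ ⟨t, rfl⟩ s
    rw [he.extend_apply, Bool.eq_iff_iff, decide_eq_true_iff, Tword_eq_true_iff, hu, hθ, hDB]

section CrossDisjoint

variable {ι α : Type*}

lemma card_le_choose_of_disjoint_iff [Fintype ι] [Fintype α] [DecidableEq α]
    {D B : ι → Finset α} (hDB : ∀ s t, Disjoint (D s) (B t) ↔ s = t) :
    Fintype.card ι ≤ (Fintype.card α).choose (Fintype.card α / 2) := by
  have hsub : ∀ s t, D s ⊆ D t → s = t := fun s t hst =>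
    (hDB s t).1 (((hDB t t).2 rfl).mono_left hst)
  have hinj : Function.Injective D := fun s t h => hsub s t h.le
  have hanti : IsAntichain (· ⊆ ·) (SetLike.coe (univ.image D)) := by
    rw [coe_image, coe_univ, Set.image_univ]
    rintro _ ⟨s, rfl⟩ _ ⟨t, rfl⟩ hne hst
    exact hne (congrArg D (hsub s t hst))
  simpa [card_image_of_injective _ hinj] using hanti.sperner

lemma exists_injective_card_eq [Fintype ι] [Fintype α] {k : ℕ}
    (h : Fintype.card ι ≤ (Fintype.card α).choose k) :
    ∃ D : ι → Finset α, Function.Injective D ∧ ∀ t, #(D t) = k := by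
  obtain ⟨e⟩ : Nonempty (ι ↪ powersetCard k (univ : Finset α)) :=
    Function.Embedding.nonempty_of_card_le (by simpa using h)
  exact ⟨fun t => e t, fun s t h => e.injective (Subtype.ext h),
    fun t => (mem_powersetCard.1 (e t).2).2⟩

lemma disjoint_compl_iff_of_injective_card_eq [Fintype α] [DecidableEq α]
    {D : ι → Finset α} {k : ℕ} (hinj : Function.Injective D) (hcard : ∀ t, #(D t) = k) (s t : ι) :
    Disjoint (D s) (D t)ᶜ ↔ s = t := by
  rw [disjoint_compl_right_iff, ← hinj.eq_iff]
  exact ⟨fun h => eq_of_subset_of_card_le h (by rw [hcard, hcard]), le_of_eq⟩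

end CrossDisjoint

theorem Eset_implementable_rejectReject_general (q n : ℕ) :
    Implementable Bdot Bdot n q (Eset q) ↔ q ≤ (2 * n).choose n := by
  have hcard : Fintype.card (Fin n × Bool) = 2 * n := by simp [mul_comm]
  rw [implementable_Eset_iff]
  constructor
  · rintro ⟨D, B, hDB⟩
    simpa [hcard] using card_le_choose_of_disjoint_iff hDB
  · intro hq
    obtain ⟨D, hinj, hD⟩ := exists_injective_card_eq (α := Fin n × Bool) (k := n) (ι := Fin q)
      (by simpa [hcard] using hq)
    exact ⟨D, fun t => (D t)ᶜ, disjoint_compl_iff_of_injective_card_eq hinj hD⟩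

theorem Eset_implementable_rejectReject (q n : ℕ) (hq : 2 ≤ q) (hn : 1 ≤ n) :
    Implementable Bdot Bdot n q (Eset q) ↔ q ≤ (2 * n).choose n :=
  Eset_implementable_rejectReject_general q n
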